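/- For N = 3 and every r ≥ 1, let J be the linear operator on (ℂ³)^{⊗r} defined by J|a₁a₂…a_r⟩ = |(4−a₁)(4−a₂)…(4−a_r)⟩, and write T^{(r)}_q(θ) for the order-r transfer matrix built with parameter q. Then J·T^{(r)}_q(θ)·J = T^{(r)}_{q^{−1}}(θ), where K(θ) (and η) are unchanged because e^η + e^{−η} = q + q^{−1} + 1 is invariant under q ↦ q^{−1}. In particular the invariant subspaces are paired as S_{r+k} ↔ S_{3r−k} for 0 ≤ k ≤ r, with corresponding eigenvalues related by q ↦ q^{−1}. -/

import Mathlib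

open Matrix BigOperators

noncomputable section

/-- The `ρ`-values: `(ρ₁,…,ρ_N) = (n−1/2,…,1/2,0,−1/2,…,−n+1/2)` for `N = 2n+1`
and `(n−1,…,1,0,0,−1,…,−n+1)` for `N = 2n` (here `i : Fin N` is the 0-based index). -/
def rho (N : ℕ) (i : Fin N) : ℝ :=
  let d : ℝ := ((N : ℝ) - 1) / 2 - (i : ℝ)
  if 0 < d then d - 1 / 2 else if d < 0 then d + 1 / 2 else 0

/-- `P₀' = Σ_{i,j} q^{ρ_{j'}−ρ_j} (ij)⊗(i'j')`, where `i' = N−i+1` (0-based: `Fin.rev`). -/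
def P0' (N : ℕ) (q : ℝ) : Matrix (Fin N × Fin N) (Fin N × Fin N) ℂ :=
  Matrix.of fun p s =>
    if p.2 = p.1.rev ∧ s.2 = s.1.rev then ((q ^ (rho N s.1.rev - rho N s.1) : ℝ) : ℂ) else 0

/-- The permutation matrix `P = Σ_{i,j} (ij)⊗(ji)`. -/
def Pmat (N : ℕ) : Matrix (Fin N × Fin N) (Fin N × Fin N) ℂ :=
  Matrix.of fun p s => if s = (p.2, p.1) then 1 else 0

/-- `K(θ) = −sinh θ / sinh(η+θ)`. -/
def Kf (η θ : ℝ) : ℝ := -Real.sinh θ / Real.sinh (η + θ)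

/-- The braid matrix `R̂(θ) = I + K(θ)·P₀'`. -/
def Rhat (N : ℕ) (q η θ : ℝ) : Matrix (Fin N × Fin N) (Fin N × Fin N) ℂ :=
  1 + (Kf η θ : ℂ) • P0' N q

/-- `t^{(1)}(θ) = P·R̂(θ)`; the block `t^{(1)}_{ij}(θ)` has entries `t^{(1)}(θ) (i,a) (j,b)`. -/
def tmat (N : ℕ) (q η θ : ℝ) : Matrix (Fin N × Fin N) (Fin N × Fin N) ℂ :=
  Pmat N * Rhat N q η θ

/-- The monodromy blocks: `mono N q η θ r (i,a) (j,b) = t^{(r)}_{ij}(θ) (a,b)` where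
`t^{(r)}_{ij} = Σ_k t^{(1)}_{ik} ⊗ t^{(r−1)}_{kj}`. -/
def mono (N : ℕ) (q η θ : ℝ) :
    (r : ℕ) → Matrix (Fin N × (Fin r → Fin N)) (Fin N × (Fin r → Fin N)) ℂ
  | 0 => Matrix.of fun p s => if p.1 = s.1 then 1 else 0
  | r + 1 => Matrix.of fun p s =>
      ∑ k : Fin N, tmat N q η θ (p.1, p.2 0) (k, s.2 0) *
        mono N q η θ r (k, Fin.tail p.2) (s.1, Fin.tail s.2)

/-- The order-`r` transfer matrix `T^{(r)}(θ) = Σ_i t^{(r)}_{ii}(θ)` acting on `(ℂ^N)^{⊗r}`. -/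
def Transfer (N : ℕ) (q η θ : ℝ) (r : ℕ) : Matrix (Fin r → Fin N) (Fin r → Fin N) ℂ :=
  Matrix.of fun a b => ∑ i : Fin N, mono N q η θ r (i, a) (i, b)

/-- The order-2 transfer matrix `T^{(2)}(θ) = Σ_{i,k} t^{(1)}_{ik}(θ) ⊗ t^{(1)}_{ki}(θ)`
acting on `ℂ^N ⊗ ℂ^N` with basis `|ab⟩`. -/
def Transfer2 (N : ℕ) (q η θ : ℝ) : Matrix (Fin N × Fin N) (Fin N × Fin N) ℂ :=
  Matrix.of fun p s =>
    ∑ i : Fin N, ∑ k : Fin N, tmat N q η θ (i, p.1) (k, s.1) * tmat N q η θ (k, p.2) (i, s.2)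

/-- The quantum integer `[m]_q`. -/
def qint (q : ℝ) (m : ℕ) : ℝ :=
  if q = 1 then (m : ℝ) else (q ^ m - q⁻¹ ^ m) / (q - q⁻¹)

/-- Standard basis vector. -/
def bv {ι : Type*} [DecidableEq ι] (a : ι) : ι → ℂ := fun c => if c = a then 1 else 0

/-- The label-reversal operator `J|a₁…a_r⟩ = |(4−a₁)…(4−a_r)⟩` (0-based: `Fin.rev`). -/
def Jmat (r : ℕ) : Matrix (Fin r → Fin 3) (Fin r → Fin 3) ℂ :=
  Matrix.of fun b a => if b = (fun i => (a i).rev) then 1 else 0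

/-! Relabelling `i ↦ i'` negates `ρ`, so conjugating `P₀'_q` by `J ⊗ J` gives `P₀'_{q⁻¹}`; as the
flip `P` commutes with `J ⊗ J`, so does `t^{(1)}`. Inducting on the recursion for `t^{(r)}`, with
the auxiliary index `k` of the sum relabelled as well, carries this to every monodromy block and
hence to the trace `T^{(r)}`. -/

lemma rho_rev (N : ℕ) (j : Fin N) : rho N j.rev = -rho N j := by
  have hd : ((N : ℝ) - 1) / 2 - (j.rev : ℕ) = -(((N : ℝ) - 1) / 2 - (j : ℕ)) := by
    have := j.isLt
    rw [Fin.val_rev, Nat.cast_sub (by omega)]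
    push_cast
    ring
  simp only [rho, hd]
  split_ifs <;> linarith

lemma P0'_rev (N : ℕ) {q : ℝ} (hq : 0 < q) (p s : Fin N × Fin N) :
    P0' N q (p.1.rev, p.2.rev) (s.1.rev, s.2.rev) = P0' N q⁻¹ p s := by
  simp only [P0', Matrix.of_apply, Fin.rev_rev, Fin.rev_eq_iff, rho_rev,
    Real.inv_rpow hq.le, ← Real.rpow_neg hq.le]
  congr 4
  ring

lemma tmat_apply (N : ℕ) (q η θ : ℝ) (p s : Fin N × Fin N) :
    tmat N q η θ p s = Rhat N q η θ (p.2, p.1) s := by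
  simp [tmat, Matrix.mul_apply, Pmat, ite_mul]

lemma tmat_rev (N : ℕ) {q : ℝ} (hq : 0 < q) (η θ : ℝ) (i a j b : Fin N) :
    tmat N q η θ (i.rev, a.rev) (j.rev, b.rev) = tmat N q⁻¹ η θ (i, a) (j, b) := by
  simp only [tmat_apply, Rhat, Matrix.add_apply, Matrix.smul_apply, Matrix.one_apply,
    Prod.ext_iff, Fin.rev_inj, P0'_rev N hq (a, i) (j, b)]

lemma mono_rev (N : ℕ) {q : ℝ} (hq : 0 < q) (η θ : ℝ) (r : ℕ) (i j : Fin N)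
    (a b : Fin r → Fin N) :
    mono N q η θ r (i.rev, fun t => (a t).rev) (j.rev, fun t => (b t).rev) =
      mono N q⁻¹ η θ r (i, a) (j, b) := by
  induction r generalizing i j with
  | zero => simp [mono, Fin.rev_inj]
  | succ n ih =>
    simp only [mono, Matrix.of_apply]
    refine Fintype.sum_equiv Fin.revPerm _ _ fun k => ?_
    have ht := tmat_rev N hq η θ i (a 0) k.rev (b 0)
    have hm := ih k.rev j (Fin.tail a) (Fin.tail b)
    rw [Fin.rev_rev] at ht hm
    exact congrArg₂ (· * ·) ht hm

lemma Transfer_rev (N : ℕ) {q : ℝ} (hq : 0 < q) (η θ : ℝ) (r : ℕ) (a b : Fin r → Fin N) :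
    Transfer N q η θ r (fun t => (a t).rev) (fun t => (b t).rev) = Transfer N q⁻¹ η θ r a b := by
  refine Fintype.sum_equiv Fin.revPerm _ _ fun k => ?_
  simpa using mono_rev N hq η θ r k.rev k.rev a b

lemma Jmat_mul_apply {r : ℕ} {ι : Type*} (M : Matrix (Fin r → Fin 3) ι ℂ) (b : Fin r → Fin 3)
    (c : ι) : (Jmat r * M) b c = M (fun t => (b t).rev) c := by
  have hrev (j : Fin r → Fin 3) : (b = fun t => (j t).rev) ↔ (j = fun t => (b t).rev) := by
    simp only [funext_iff]
    exact forall_congr' fun t => by rw [eq_comm, Fin.rev_eq_iff]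
  simp [Matrix.mul_apply, Jmat, hrev]

lemma mul_Jmat_apply {r : ℕ} {ι : Type*} (M : Matrix ι (Fin r → Fin 3) ℂ) (c : ι)
    (a : Fin r → Fin 3) : (M * Jmat r) c a = M c (fun t => (a t).rev) := by
  simp [Matrix.mul_apply, Jmat]

lemma sum_rev_add_sum (N r : ℕ) (a : Fin r → Fin N) :
    (∑ i, (((a i).rev : ℕ) + 1)) + ∑ i, ((a i : ℕ) + 1) = (N + 1) * r := by
  rw [← Finset.sum_add_distrib, Finset.sum_congr rfl fun i _ => ?_, Finset.sum_const,
    Finset.card_univ, Fintype.card_fin, smul_eq_mul, mul_comm]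
  have := (a i).isLt
  rw [Fin.val_rev]
  omega

theorem transfer_q_inversion_general (q : ℝ) (hq : 0 < q) (η : ℝ) (θ : ℝ) (r : ℕ) :
    Jmat r * Transfer 3 q η θ r * Jmat r = Transfer 3 q⁻¹ η θ r ∧
    ∀ a : Fin r → Fin 3,
      (∑ i, (((a i).rev : ℕ) + 1)) = 4 * r - ∑ i, ((a i : ℕ) + 1) := by
  refine ⟨?_, fun a => ?_⟩
  · ext b a
    rw [mul_Jmat_apply, Jmat_mul_apply, Transfer_rev 3 hq]
  · have := sum_rev_add_sum 3 r a
    omega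

/-- For `N = 3` and every `r ≥ 1`, `J·T^{(r)}_q(θ)·J = T^{(r)}_{q⁻¹}(θ)`; moreover `J` maps
the invariant subspace `S_n` to `S_{4r−n}`, pairing `S_{r+k} ↔ S_{3r−k}` with eigenvalues
related by `q ↦ q⁻¹`. -/
theorem transfer_q_inversion (q : ℝ) (hq : 0 < q) (η : ℝ) (hηpos : 0 < η)
    (hη : Real.exp η + Real.exp (-η) = q + q⁻¹ + 1)
    (θ : ℝ) (hθ : Real.sinh (η + θ) ≠ 0) (r : ℕ) (hr : 1 ≤ r) :
    Jmat r * Transfer 3 q η θ r * Jmat r = Transfer 3 q⁻¹ η θ r ∧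
    ∀ a : Fin r → Fin 3,
      (∑ i, (((a i).rev : ℕ) + 1)) = 4 * r - ∑ i, ((a i : ℕ) + 1) :=
  transfer_q_inversion_general q hq η θ r

end
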